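/- Let C be a triangulated category with adjacent weight structure w and t-structure t, m ≤ n, and M an object. Fix a weight decomposition morphism M → w_{≥m}M and form R := t_{≤n}(w_{≥m}M) with the composite h : M → R; complete h to a distinguished triangle L → M → R → L[1]. Then L is an extension of t_{≥n+1}(w_{≥m}M) by w_{≤m-1}M, so L is without weights m,...,n, and R ∈ C[m,n]. -/

import Mathlib

open CategoryTheory CategoryTheory.Limits CategoryTheory.Pretriangulated Opposite

universe v u

variable (C : Type u) [Category.{v} C] [Preadditive C] [HasZeroObject C]
  [HasShift C ℤ] [∀ n : ℤ, (shiftFunctor C n).Additive] [Pretriangulated C]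

/-- A weight structure on the triangulated category `C`. -/
structure WeightStructure where
  /-- the class `C_{w ≤ n}` -/
  le : ℤ → Set C
  /-- the class `C_{w ≥ n}` -/
  ge : ℤ → Set C
  le_iso_closed : ∀ (n : ℤ) (X Y : C), (X ≅ Y) → X ∈ le n → Y ∈ le n
  ge_iso_closed : ∀ (n : ℤ) (X Y : C), (X ≅ Y) → X ∈ ge n → Y ∈ ge n
  le_retract : ∀ (n : ℤ) (X Y : C) (a : X ⟶ Y) (b : Y ⟶ X),
    a ≫ b = 𝟙 X → Y ∈ le n → X ∈ le n
  ge_retract : ∀ (n : ℤ) (X Y : C) (a : X ⟶ Y) (b : Y ⟶ X),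
    a ≫ b = 𝟙 X → Y ∈ ge n → X ∈ ge n
  le_shift : ∀ (n k : ℤ) (X : C), X ∈ le n → X⟦k⟧ ∈ le (n + k)
  ge_shift : ∀ (n k : ℤ) (X : C), X ∈ ge n → X⟦k⟧ ∈ ge (n + k)
  le_mono : ∀ n : ℤ, le n ⊆ le (n + 1)
  ge_anti : ∀ n : ℤ, ge (n + 1) ⊆ ge n
  orth : ∀ (n : ℤ) (X Y : C), X ∈ le n → Y ∈ ge (n + 1) → ∀ f : X ⟶ Y, f = 0
  decomp : ∀ (X : C) (k : ℤ), ∃ (A B : C) (x : A ⟶ X) (y : X ⟶ B) (δ : B ⟶ A⟦(1 : ℤ)⟧),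
    (Triangle.mk x y δ ∈ distTriang C) ∧ A ∈ le k ∧ B ∈ ge (k + 1)

variable {C}

/-- `(A, B, x, y)` is a `k`-weight decomposition of `X`. -/
def WeightStructure.IsWeightDecomp (w : WeightStructure C) (k : ℤ) {X : C} (A B : C)
    (x : A ⟶ X) (y : X ⟶ B) : Prop :=
  (∃ δ : B ⟶ A⟦(1 : ℤ)⟧, Triangle.mk x y δ ∈ distTriang C) ∧ A ∈ w.le k ∧ B ∈ w.ge (k + 1)

/-- `g : M ⟶ N` kills weights `m, …, n`. -/
def WeightStructure.KillsWeights (w : WeightStructure C) (m n : ℤ) {M N : C}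
    (g : M ⟶ N) : Prop :=
  ∃ (A A' B B' : C) (x : A ⟶ M) (x' : M ⟶ A') (y' : B ⟶ N) (y : N ⟶ B'),
    w.IsWeightDecomp n A A' x x' ∧ w.IsWeightDecomp (m - 1) B B' y' y ∧
      x ≫ g ≫ y = 0

/-- The class of objects of `C` without weights `m, …, n`. -/
def WeightStructure.without (w : WeightStructure C) (m n : ℤ) : Set C :=
  {M : C | w.KillsWeights m n (𝟙 M)}


/-- A `t`-structure on the triangulated category `C` (cohomological conventions,
with `le n = C_{t ≤ n}` and `ge n = C_{t ≥ n}`). -/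
structure TStructure (C : Type u) [Category.{v} C] [Preadditive C] [HasZeroObject C]
    [HasShift C ℤ] [∀ n : ℤ, (shiftFunctor C n).Additive] [Pretriangulated C] where
  le : ℤ → Set C
  ge : ℤ → Set C
  le_iso_closed : ∀ (n : ℤ) (X Y : C), (X ≅ Y) → X ∈ le n → Y ∈ le n
  ge_iso_closed : ∀ (n : ℤ) (X Y : C), (X ≅ Y) → X ∈ ge n → Y ∈ ge n
  le_shift : ∀ (n k : ℤ) (X : C), X ∈ le n → X⟦k⟧ ∈ le (n + k)
  ge_shift : ∀ (n k : ℤ) (X : C), X ∈ ge n → X⟦k⟧ ∈ ge (n + k)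
  le_mono : ∀ n : ℤ, le n ⊆ le (n + 1)
  ge_anti : ∀ n : ℤ, ge (n + 1) ⊆ ge n
  orth : ∀ (n : ℤ) (X Y : C), X ∈ ge (n + 1) → Y ∈ le n → ∀ f : X ⟶ Y, f = 0
  decomp : ∀ (X : C) (n : ℤ), ∃ (A B : C) (x : A ⟶ X) (y : X ⟶ B) (δ : B ⟶ A⟦(1 : ℤ)⟧),
    (Triangle.mk x y δ ∈ distTriang C) ∧ A ∈ ge (n + 1) ∧ B ∈ le n

/-
The fibre of `M → t_{≤n}(w_{≥m}M)` is compared with `w_{≤m-1}M` by lifting `(𝟙 M, q)` to a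
morphism of triangles `f : A → L`. Its cone `Q` receives no nonzero maps from `C_{w≤n}`: chasing
such a map through the three triangles reduces it to maps into `T ∈ C_{w≥n+1}`, which vanish.
Hence `Q ∈ C_{w≥n+1} = C_{t≥n+1}`. For objects of `C_{t≥n+1}`, maps into `Q` and into `T` both
correspond bijectively to maps into `W`, since `R ∈ C_{t≤n}`; so `Q ≅ T` and `A → L → T` is
distinguished. It is a weight decomposition of `L` in the two degrees `m - 1` and `n`, and `R` is
an extension of `T⟦1⟧` by `W`, both in `C_{t≥m}`.
-/

lemma WeightStructure.le_monotone (w : WeightStructure C) : Monotone w.le :=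
  monotone_int_of_le_succ w.le_mono

lemma WeightStructure.ge_antitone (w : WeightStructure C) : Antitone w.ge :=
  antitone_int_of_succ_le w.ge_anti

lemma TStructure.ge_antitone (t : TStructure C) : Antitone t.ge :=
  antitone_int_of_succ_le t.ge_anti

lemma TStructure.shift_one_mem_ge (t : TStructure C) {n : ℤ} {X : C} (hX : X ∈ t.ge n) :
    X⟦(1 : ℤ)⟧ ∈ t.ge n :=
  t.ge_anti n (t.ge_shift n 1 X hX)

lemma ge_eq_of_adjacent (w : WeightStructure C) (t : TStructure C) (adj : w.ge 0 = t.ge 0)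
    (k : ℤ) : w.ge k = t.ge k := by
  have transfer : ∀ {S S' : ℤ → Set C},
      (∀ (i j : ℤ) (X : C), X ∈ S i → X⟦j⟧ ∈ S (i + j)) →
      (∀ (i j : ℤ) (X : C), X ∈ S' i → X⟦j⟧ ∈ S' (i + j)) →
      (∀ (i : ℤ) (X Y : C), (X ≅ Y) → X ∈ S' i → Y ∈ S' i) → S 0 ⊆ S' 0 → S k ⊆ S' k := by
    intro S S' hS hS' hS'_iso h₀ X hX
    have h : X⟦-k⟧ ∈ S' 0 := h₀ (by simpa using hS k (-k) X hX)
    exact hS'_iso k _ _ ((shiftFunctorCompIsoId C (-k) k (neg_add_cancel k)).app X)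
      (by simpa using hS' 0 k _ h)
  exact (transfer w.ge_shift t.ge_shift t.ge_iso_closed adj.le).antisymm
    (transfer t.ge_shift w.ge_shift w.ge_iso_closed adj.ge)

/- The (co)Yoneda exactness of distinguished triangles, restated for `Triangle.mk` so that the
conclusions mention the given objects rather than projections of a triangle. -/
namespace CategoryTheory.Pretriangulated

variable {X₁ X₂ X₃ : C} {f₁ : X₁ ⟶ X₂} {f₂ : X₂ ⟶ X₃} {f₃ : X₃ ⟶ X₁⟦(1 : ℤ)⟧}

lemma yoneda_exact₂_mk (hT : Triangle.mk f₁ f₂ f₃ ∈ distTriang C) {X : C} (g : X₂ ⟶ X)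
    (hg : f₁ ≫ g = 0) : ∃ h : X₃ ⟶ X, g = f₂ ≫ h :=
  Triangle.yoneda_exact₂ _ hT g hg

lemma coyoneda_exact₁_mk (hT : Triangle.mk f₁ f₂ f₃ ∈ distTriang C) {X : C}
    (g : X ⟶ X₁⟦(1 : ℤ)⟧) (hg : g ≫ f₁⟦(1 : ℤ)⟧' = 0) : ∃ h : X ⟶ X₃, g = h ≫ f₃ :=
  Triangle.coyoneda_exact₁ _ hT g hg

lemma coyoneda_exact₂_mk (hT : Triangle.mk f₁ f₂ f₃ ∈ distTriang C) {X : C} (g : X ⟶ X₂)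
    (hg : g ≫ f₂ = 0) : ∃ h : X ⟶ X₁, g = h ≫ f₁ :=
  Triangle.coyoneda_exact₂ _ hT g hg

lemma coyoneda_exact₃_mk (hT : Triangle.mk f₁ f₂ f₃ ∈ distTriang C) {X : C} (g : X ⟶ X₃)
    (hg : g ≫ f₃ = 0) : ∃ h : X ⟶ X₂, g = h ≫ f₂ :=
  Triangle.coyoneda_exact₃ _ hT g hg

lemma eq_zero_of_comp_mor₁_eq_zero (hT : Triangle.mk f₁ f₂ f₃ ∈ distTriang C) {X : C}
    (g : X ⟶ X₁) (hg : g ≫ f₁ = 0) (h : ∀ j : X⟦(1 : ℤ)⟧ ⟶ X₃, j = 0) : g = 0 := by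
  obtain ⟨j, hj⟩ := coyoneda_exact₁_mk hT (g⟦(1 : ℤ)⟧')
    (by rw [← Functor.map_comp, hg, Functor.map_zero])
  rw [h j, zero_comp] at hj
  exact (Functor.map_eq_zero_iff _).1 hj

lemma distinguished_of_iso₃ (hT : Triangle.mk f₁ f₂ f₃ ∈ distTriang C) {X₃' : C}
    (e : X₃ ≅ X₃') : Triangle.mk f₁ (f₂ ≫ e.hom) (e.inv ≫ f₃) ∈ distTriang C :=
  isomorphic_distinguished _ hT _ (Triangle.isoMk _ _ (Iso.refl X₁) (Iso.refl X₂) e.symm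
    (by exact (by simp : f₁ ≫ 𝟙 X₂ = 𝟙 X₁ ≫ f₁))
    (by exact (by simp : (f₂ ≫ e.hom) ≫ e.inv = 𝟙 X₂ ≫ f₂))
    (by exact (by simp : (e.inv ≫ f₃) ≫ (𝟙 X₁)⟦(1 : ℤ)⟧' = e.inv ≫ f₃)))

end CategoryTheory.Pretriangulated

lemma WeightStructure.mem_ge_of_forall_hom_eq_zero (w : WeightStructure C) {n : ℤ} {X : C}
    (h : ∀ Z ∈ w.le n, ∀ s : Z ⟶ X, s = 0) : X ∈ w.ge (n + 1) := by
  obtain ⟨Z, B, x, y, δ, hT, hZ, hB⟩ := w.decomp X n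
  obtain ⟨s, hs⟩ := yoneda_exact₂_mk hT (𝟙 X) (by rw [h Z hZ x, zero_comp])
  exact w.ge_retract _ X B y s hs.symm hB

lemma TStructure.mem_ge_of_forall_hom_eq_zero (t : TStructure C) (w : WeightStructure C)
    (adj : w.ge 0 = t.ge 0) {n : ℤ} {X : C} (h : ∀ Y ∈ t.le n, ∀ g : X ⟶ Y, g = 0) :
    X ∈ t.ge (n + 1) := by
  obtain ⟨Z, Y, x, y, δ, hT, hZ, hY⟩ := t.decomp X n
  obtain ⟨s, hs⟩ := coyoneda_exact₂_mk hT (𝟙 X) (by rw [h Y hY y, comp_zero])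
  rw [← ge_eq_of_adjacent w t adj] at hZ ⊢
  exact w.ge_retract _ X Z s x hs.symm hZ

lemma TStructure.mem_ge_of_distTriang (t : TStructure C) (w : WeightStructure C)
    (adj : w.ge 0 = t.ge 0) {k : ℤ} {X₁ X₂ X₃ : C} {f₁ : X₁ ⟶ X₂} {f₂ : X₂ ⟶ X₃}
    {f₃ : X₃ ⟶ X₁⟦(1 : ℤ)⟧} (hT : Triangle.mk f₁ f₂ f₃ ∈ distTriang C)
    (h₁ : X₁ ∈ t.ge k) (h₃ : X₃ ∈ t.ge k) : X₂ ∈ t.ge k := by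
  rw [← sub_add_cancel k 1] at h₁ h₃ ⊢
  refine t.mem_ge_of_forall_hom_eq_zero w adj fun Y hY g => ?_
  obtain ⟨g', rfl⟩ := yoneda_exact₂_mk hT g (t.orth _ _ _ h₁ hY _)
  rw [t.orth _ _ _ h₃ hY g', comp_zero]

lemma WeightStructure.mem_without_of_distTriang (w : WeightStructure C) {m n : ℤ}
    (hmn : m ≤ n + 1) {A L B : C} {f : A ⟶ L} {g : L ⟶ B} {δ : B ⟶ A⟦(1 : ℤ)⟧}
    (hT : Triangle.mk f g δ ∈ distTriang C) (hA : A ∈ w.le (m - 1)) (hB : B ∈ w.ge (n + 1)) :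
    L ∈ w.without m n :=
  ⟨A, B, A, B, f, g, f, g, ⟨⟨δ, hT⟩, w.le_monotone (by omega) hA, hB⟩,
    ⟨⟨δ, hT⟩, hA, w.ge_antitone (by omega) hB⟩,
    by rw [Category.id_comp]; exact comp_distTriang_mor_zero₁₂ _ hT⟩

/- `A → M → W`, `T → W → R` and `L → M → R` are triangles on `p`, `q` and `p ≫ q`; `f` is the
morphism of fibres over `(𝟙 M, q)`, `Q` its cone and `c : Q → W` the induced comparison. The
octahedral axiom would give `Q ≅ T` over `W`; since `C` is only pretriangulated, we get this from
orthogonality instead. -/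
section Comparison

variable {A M W T R L Q : C} {a : A ⟶ M} {p : M ⟶ W} {δ₁ : W ⟶ A⟦(1 : ℤ)⟧}
  {u : T ⟶ W} {q : W ⟶ R} {δ₂ : R ⟶ T⟦(1 : ℤ)⟧} {l : L ⟶ M} {δ₃ : R ⟶ L⟦(1 : ℤ)⟧}
  {f : A ⟶ L} {g : L ⟶ Q} {δ : Q ⟶ A⟦(1 : ℤ)⟧} {c : Q ⟶ W}

lemma exists_sub_comp_comp_eq_zero (hT₁ : Triangle.mk a p δ₁ ∈ distTriang C) (hfl : f ≫ l = a)
    {X : C} (v : X ⟶ L) (hv : v ≫ l ≫ p = 0) : ∃ κ : X ⟶ A, (v - κ ≫ f) ≫ l = 0 := by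
  obtain ⟨κ, hκ⟩ := coyoneda_exact₂_mk hT₁ (v ≫ l) (by rw [Category.assoc, hv])
  exact ⟨κ, by rw [Preadditive.sub_comp, Category.assoc, hfl, hκ, sub_self]⟩

lemma exists_comp_comparison_eq (hT₀ : Triangle.mk f g δ ∈ distTriang C)
    (hT₁ : Triangle.mk a p δ₁ ∈ distTriang C) (hT₃ : Triangle.mk l (p ≫ q) δ₃ ∈ distTriang C)
    (hδ₃ : δ₁ ≫ f⟦(1 : ℤ)⟧' = q ≫ δ₃) (hc₁ : g ≫ c = l ≫ p) (hc₂ : δ = c ≫ δ₁)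
    {X : C} (hX : ∀ h : X ⟶ R, h = 0) (x : X ⟶ W) : ∃ y : X ⟶ Q, y ≫ c = x := by
  obtain ⟨y, hy⟩ := coyoneda_exact₁_mk hT₀ (x ≫ δ₁)
    (by rw [Category.assoc, hδ₃, ← Category.assoc, hX (x ≫ q), zero_comp])
  obtain ⟨z, hz⟩ := coyoneda_exact₃_mk hT₁ (x - y ≫ c)
    (by rw [Preadditive.sub_comp, hy, Category.assoc, hc₂, sub_self])
  obtain ⟨z', rfl⟩ := coyoneda_exact₂_mk hT₃ z (hX _)
  refine ⟨y + z' ≫ g, ?_⟩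
  rw [Preadditive.add_comp, Category.assoc, hc₁, ← Category.assoc, ← hz, add_sub_cancel]

lemma eq_zero_of_comp_comparison_eq_zero (hT₀ : Triangle.mk f g δ ∈ distTriang C)
    (hT₁ : Triangle.mk a p δ₁ ∈ distTriang C) (hT₃ : Triangle.mk l (p ≫ q) δ₃ ∈ distTriang C)
    (hfl : f ≫ l = a) (hc₁ : g ≫ c = l ≫ p) (hc₂ : δ = c ≫ δ₁)
    {X : C} (hX : ∀ h : X⟦(1 : ℤ)⟧ ⟶ R, h = 0) (y : X ⟶ Q) (hy : y ≫ c = 0) : y = 0 := by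
  obtain ⟨v, rfl⟩ := coyoneda_exact₃_mk hT₀ y
    (by rw [hc₂, ← Category.assoc, hy, zero_comp])
  obtain ⟨κ, hκ⟩ := exists_sub_comp_comp_eq_zero hT₁ hfl v
    (by rw [← hc₁, ← Category.assoc, hy])
  have hfg : f ≫ g = 0 := comp_distTriang_mor_zero₁₂ _ hT₀
  rw [sub_eq_zero.1 (eq_zero_of_comp_mor₁_eq_zero hT₃ _ hκ hX), Category.assoc, hfg, comp_zero]

lemma exists_eq_comp_of_forall_hom_eq_zero (hT₀ : Triangle.mk f g δ ∈ distTriang C)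
    (hT₁ : Triangle.mk a p δ₁ ∈ distTriang C) (hT₂ : Triangle.mk u q δ₂ ∈ distTriang C)
    (hT₃ : Triangle.mk l (p ≫ q) δ₃ ∈ distTriang C)
    (hδ₃ : δ₁ ≫ f⟦(1 : ℤ)⟧' = q ≫ δ₃) (hc₂ : δ = c ≫ δ₁)
    {Z : C} (hZ : ∀ h : Z ⟶ T, h = 0) (s : Z ⟶ Q) : ∃ v : Z ⟶ L, s = v ≫ g := by
  have hδf : δ ≫ f⟦(1 : ℤ)⟧' = 0 := comp_distTriang_mor_zero₃₁ _ hT₀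
  have hpδ₁ : p ≫ δ₁ = 0 := comp_distTriang_mor_zero₂₃ _ hT₁
  obtain ⟨μ, hμ⟩ := coyoneda_exact₃_mk hT₃ (s ≫ c ≫ q) (by
    rw [Category.assoc, Category.assoc, ← hδ₃, ← Category.assoc c, ← hc₂, hδf, comp_zero])
  obtain ⟨ν, hν⟩ := coyoneda_exact₂_mk hT₂ (s ≫ c - μ ≫ p)
    (by rw [Preadditive.sub_comp, Category.assoc, hμ, Category.assoc, sub_self])
  rw [hZ ν, zero_comp, sub_eq_zero] at hν
  refine coyoneda_exact₃_mk hT₀ s ?_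
  rw [hc₂, ← Category.assoc, hν, Category.assoc, hpδ₁, comp_zero]

lemma comp_eq_zero_of_forall_hom_eq_zero (hT₀ : Triangle.mk f g δ ∈ distTriang C)
    (hT₁ : Triangle.mk a p δ₁ ∈ distTriang C) (hT₂ : Triangle.mk u q δ₂ ∈ distTriang C)
    (hT₃ : Triangle.mk l (p ≫ q) δ₃ ∈ distTriang C) (hfl : f ≫ l = a)
    (hδ₃ : δ₁ ≫ f⟦(1 : ℤ)⟧' = q ≫ δ₃)
    {Z : C} (hZ : ∀ h : Z ⟶ T, h = 0) (v : Z ⟶ L) : v ≫ g = 0 := by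
  have hfg : f ≫ g = 0 := comp_distTriang_mor_zero₁₂ _ hT₀
  have hlpq : l ≫ p ≫ q = 0 := comp_distTriang_mor_zero₁₂ _ hT₃
  obtain ⟨ν, hν⟩ := coyoneda_exact₂_mk hT₂ (v ≫ l ≫ p)
    (by rw [Category.assoc, Category.assoc, hlpq, comp_zero])
  rw [hZ ν, zero_comp] at hν
  obtain ⟨κ, hκ⟩ := exists_sub_comp_comp_eq_zero hT₁ hfl v hν
  obtain ⟨j, hj⟩ := coyoneda_exact₁_mk hT₃ ((v - κ ≫ f)⟦(1 : ℤ)⟧')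
    (by rw [← Functor.map_comp, hκ, Functor.map_zero])
  -- `Hom(Z⟦1⟧, T⟦1⟧) ≅ Hom(Z, T)` vanishes, so `j` factors through `q`
  obtain ⟨j', rfl⟩ := coyoneda_exact₃_mk hT₂ j (by
    rw [← (shiftFunctor C (1 : ℤ)).map_preimage (j ≫ δ₂), hZ (Functor.preimage _ _),
      Functor.map_zero])
  have hvκ : (v - κ ≫ f) ≫ g = 0 := by
    refine (Functor.map_eq_zero_iff (shiftFunctor C (1 : ℤ))).1 ?_
    rw [Functor.map_comp, hj, Category.assoc j', ← hδ₃]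
    simp only [Category.assoc, ← Functor.map_comp, hfg, Functor.map_zero, comp_zero]
  rwa [Preadditive.sub_comp, Category.assoc, hfg, comp_zero, sub_zero] at hvκ

lemma exists_iso_comp_eq_comparison (t : TStructure C) {n : ℤ}
    (hT₀ : Triangle.mk f g δ ∈ distTriang C) (hT₁ : Triangle.mk a p δ₁ ∈ distTriang C)
    (hT₂ : Triangle.mk u q δ₂ ∈ distTriang C) (hT₃ : Triangle.mk l (p ≫ q) δ₃ ∈ distTriang C)
    (hfl : f ≫ l = a) (hδ₃ : δ₁ ≫ f⟦(1 : ℤ)⟧' = q ≫ δ₃) (hc₁ : g ≫ c = l ≫ p)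
    (hc₂ : δ = c ≫ δ₁) (hQ : Q ∈ t.ge (n + 1)) (hT : T ∈ t.ge (n + 1)) (hR : R ∈ t.le n) :
    ∃ e : Q ≅ T, e.hom ≫ u = c := by
  have hR₀ {X : C} (hX : X ∈ t.ge (n + 1)) (h : X ⟶ R) : h = 0 := t.orth n _ _ hX hR h
  have hR₁ {X : C} (hX : X ∈ t.ge (n + 1)) (h : X⟦(1 : ℤ)⟧ ⟶ R) : h = 0 :=
    hR₀ (t.shift_one_mem_ge hX) h
  obtain ⟨φ, hφ⟩ := coyoneda_exact₂_mk hT₂ c (hR₀ hQ _)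
  obtain ⟨ψ, hψ⟩ := exists_comp_comparison_eq hT₀ hT₁ hT₃ hδ₃ hc₁ hc₂ (hR₀ hT) u
  refine ⟨⟨φ, ψ, ?_, ?_⟩, hφ.symm⟩
  · refine sub_eq_zero.1 (eq_zero_of_comp_comparison_eq_zero hT₀ hT₁ hT₃ hfl hc₁ hc₂
      (hR₁ hQ) _ ?_)
    rw [Preadditive.sub_comp, Category.assoc, hψ, ← hφ, Category.id_comp, sub_self]
  · refine sub_eq_zero.1 (eq_zero_of_comp_mor₁_eq_zero hT₂ _ ?_ (hR₁ hT))
    rw [Preadditive.sub_comp, Category.assoc, ← hφ, hψ, Category.id_comp, sub_self]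

end Comparison

/-- The explicit construction of the torsion decomposition: `L` is an extension
of `t_{≥ n+1}(w_{≥ m}M)` by `w_{≤ m-1}M`, hence without weights `m, …, n`, and
`R = t_{≤ n}(w_{≥ m}M) ∈ C[m, n]`. -/
theorem stmt14 (w : WeightStructure C) (t : TStructure C)
    (adj : w.ge 0 = t.ge 0) (m n : ℤ) (hmn : m ≤ n) (M : C)
    (A W : C) (a : A ⟶ M) (p : M ⟶ W) (δ₁ : W ⟶ A⟦(1 : ℤ)⟧)
    (hT₁ : Triangle.mk a p δ₁ ∈ distTriang C) (hA : A ∈ w.le (m - 1))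
    (hW : W ∈ w.ge m)
    (T R : C) (u : T ⟶ W) (q : W ⟶ R) (δ₂ : R ⟶ T⟦(1 : ℤ)⟧)
    (hT₂ : Triangle.mk u q δ₂ ∈ distTriang C) (hT : T ∈ t.ge (n + 1))
    (hR : R ∈ t.le n)
    (L : C) (l : L ⟶ M) (δ₃ : R ⟶ L⟦(1 : ℤ)⟧)
    (hT₃ : Triangle.mk l (p ≫ q) δ₃ ∈ distTriang C) :
    (∃ (f : A ⟶ L) (g : L ⟶ T) (δ : T ⟶ A⟦(1 : ℤ)⟧),
      Triangle.mk f g δ ∈ distTriang C) ∧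
    L ∈ w.without m n ∧ R ∈ t.le n ∩ t.ge m := by
  have hTw : T ∈ w.ge (n + 1) := by rwa [ge_eq_of_adjacent w t adj]
  obtain ⟨f, hfl, hδ₃⟩ : ∃ f : A ⟶ L, a ≫ 𝟙 M = f ≫ l ∧ δ₁ ≫ f⟦(1 : ℤ)⟧' = q ≫ δ₃ :=
    complete_distinguished_triangle_morphism₁ _ _ hT₁ hT₃ (𝟙 M) q (Category.id_comp _).symm
  replace hfl : f ≫ l = a := by rw [← hfl, Category.comp_id]
  obtain ⟨Q, g, δ, hT₀⟩ := distinguished_cocone_triangle f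
  obtain ⟨c, hc₁, hc₂⟩ : ∃ c : Q ⟶ W, g ≫ c = l ≫ p ∧ δ ≫ (𝟙 A)⟦(1 : ℤ)⟧' = c ≫ δ₁ :=
    Pretriangulated.complete_distinguished_triangle_morphism _ _ hT₀ hT₁ (𝟙 A) l
      (hfl.trans (Category.id_comp _).symm)
  rw [CategoryTheory.Functor.map_id, Category.comp_id] at hc₂
  have hQ : Q ∈ t.ge (n + 1) := by
    rw [← ge_eq_of_adjacent w t adj]
    refine w.mem_ge_of_forall_hom_eq_zero fun Z hZ s => ?_
    have hZT : ∀ h : Z ⟶ T, h = 0 := w.orth n Z T hZ hTw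
    obtain ⟨v, rfl⟩ := exists_eq_comp_of_forall_hom_eq_zero hT₀ hT₁ hT₂ hT₃ hδ₃ hc₂ hZT s
    exact comp_eq_zero_of_forall_hom_eq_zero hT₀ hT₁ hT₂ hT₃ hfl hδ₃ hZT v
  obtain ⟨e, -⟩ := exists_iso_comp_eq_comparison t hT₀ hT₁ hT₂ hT₃ hfl hδ₃ hc₁ hc₂ hQ hT hR
  have hTshift : T⟦(1 : ℤ)⟧ ∈ t.ge m := t.ge_antitone (by omega) (t.ge_shift (n + 1) 1 T hT)
  refine ⟨⟨f, g ≫ e.hom, e.inv ≫ δ, distinguished_of_iso₃ hT₀ e⟩,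
    w.mem_without_of_distTriang (by omega) (distinguished_of_iso₃ hT₀ e) hA hTw, hR, ?_⟩
  exact t.mem_ge_of_distTriang w adj (rot_of_distTriang _ hT₂)
    (by rwa [← ge_eq_of_adjacent w t adj]) hTshift
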